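/- arXiv:1809.05722 — 2 statements merged into one kernel-verified Lean document; each statement's English description precedes it below -/
import Mathlib

section
/- For any real numbers y, δ, λ, η with η > 0 and any p ∈ ℝ, ∫ℝ z² · g(y; λp+δ, η²/z²) · g(z; 0, 1) dz = (2/(π η)) · [1 + ((y − λp − δ)/η)²]^{−2}, where g(x; a, b) = (1/√(2πb)) exp(−(x−a)²/(2b)) is the normal density and the integrand at z = 0 is interpreted as 0. -/
open MeasureTheory Real

/-- The normal density with mean `a` and variance `b`. -/
noncomputable def normalPdf (a b x : ℝ) : ℝ :=
  (1 / Real.sqrt (2 * π * b)) * Real.exp (-(x - a) ^ 2 / (2 * b))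

/-!
For `z ≠ 0` the two Gaussian exponents combine: `z² g(y; m, η²/z²) g(z; 0, 1)` equals
`|z|³ exp(-c z²/2) / (2πη)` with `c = 1 + ((y - m)/η)²`, the factor `|z|` coming from the
standard deviation `η/|z|`. The integrand is therefore even in `z`, and its integral is the
absolute Gaussian moment `∫ |z|³ e^{-b z²} dz = b^{-2} Γ(2)` at `b = c/2`.
-/

theorem integral_abs_rpow_mul_exp_neg_mul_sq {b s : ℝ} (hb : 0 < b) (hs : -1 < s) :
    ∫ z : ℝ, |z| ^ s * exp (-b * z ^ 2) = b ^ (-(s + 1) / 2) * Gamma ((s + 1) / 2) := by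
  have h_even := integral_comp_abs (f := fun t => t ^ s * exp (-b * t ^ 2))
  have h_half := integral_rpow_mul_exp_neg_mul_rpow two_pos hs hb
  simp only [sq_abs] at h_even
  simp only [rpow_two] at h_half
  rw [h_even, h_half]
  ring

theorem sq_mul_normalPdf_mul_normalPdf {m η y z : ℝ} (hη : 0 < η) (hz : z ≠ 0) :
    z ^ 2 * normalPdf m (η ^ 2 / z ^ 2) y * normalPdf 0 1 z =
      (2 * π * η)⁻¹ * (|z| ^ (3 : ℝ) * exp (-((1 + ((y - m) / η) ^ 2) / 2) * z ^ 2)) := by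
  have h_sqrt : √(2 * π * (η ^ 2 / z ^ 2)) = √(2 * π) * η / |z| := by
    rw [sqrt_mul (by positivity), sqrt_div (by positivity), sqrt_sq hη.le, sqrt_sq_eq_abs]
    ring
  have h_exp : exp (-(y - m) ^ 2 / (2 * (η ^ 2 / z ^ 2))) * exp (-(z - 0) ^ 2 / (2 * 1)) =
      exp (-((1 + ((y - m) / η) ^ 2) / 2) * z ^ 2) := by
    rw [← exp_add]
    congr 1
    field_simp
    ring
  have h_cube : |z| ^ (3 : ℝ) = z ^ 2 * |z| := by
    rw [show (3 : ℝ) = (3 : ℕ) by norm_num, rpow_natCast, pow_succ, sq_abs]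
  rw [normalPdf, normalPdf, h_sqrt, mul_one, ← h_exp, h_cube]
  field_simp
  exact (sq_sqrt (by positivity)).symm

/-- The `z`-integral appearing in the E-step of the EM algorithm:
`∫ℝ z² g(y; λp+δ, η²/z²) g(z;0,1) dz = (2/(πη)) [1 + ((y−λp−δ)/η)²]^{−2}`,
the integrand at `z = 0` being interpreted as `0`. -/
theorem estep_z_integral (y δ lam η p : ℝ) (hη : 0 < η) :
    ∫ z : ℝ, (if z = 0 then 0 else
      z ^ 2 * normalPdf (lam * p + δ) (η ^ 2 / z ^ 2) y * normalPdf 0 1 z) =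
      (2 / (π * η)) * (1 + ((y - lam * p - δ) / η) ^ 2) ^ (-2 : ℤ) := by
  set c := 1 + ((y - lam * p - δ) / η) ^ 2
  have hc : 0 < c := by positivity
  have h_integrand : (fun z : ℝ => if z = 0 then 0 else
      z ^ 2 * normalPdf (lam * p + δ) (η ^ 2 / z ^ 2) y * normalPdf 0 1 z) =ᵐ[volume]
      fun z => (2 * π * η)⁻¹ * (|z| ^ (3 : ℝ) * exp (-(c / 2) * z ^ 2)) := by
    filter_upwards [Measure.ae_ne volume 0] with z hz
    rw [if_neg hz, sq_mul_normalPdf_mul_normalPdf hη hz, ← sub_sub]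
  rw [integral_congr_ae h_integrand, integral_const_mul,
    integral_abs_rpow_mul_exp_neg_mul_sq (by positivity) (by norm_num)]
  norm_num [Gamma_two, rpow_neg, zpow_neg]
  field_simp
end

section
/- Let φ_{β,σ,μ}(t) = exp(−|σt|(1 + i(2/π)β·sgn(t)·log|t|) + iμt) denote the S₁-parameterization characteristic function of a Cauchy law (with the convention sgn(0)·log|0|·|σ·0| = 0). Then for any β ∈ [−1,1], σ > 0, μ ∈ ℝ, we have φ_{β,σ,μ}(t) = exp(−σ(1−|β|)|t|) · ψ(t), where ψ(t) = exp(−|σβt|(1 + i(2/π)sgn(βt)log|σβt|) + it(μ + (2/π)σβ log|σβ|)) is the S₀-parameterization characteristic function of a Cauchy law with skewness sgn(β), scale |σβ|, and location μ + (2/π)σβ log|σβ| (when β ≠ 0; when β = 0, ψ(t) = exp(iμt)). -/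
open Real Complex

private lemma sign_mul_abs' (r : ℝ) : Real.sign r * |r| = r := by
  rcases lt_trichotomy r 0 with h | h | h
  · rw [Real.sign_of_neg h, abs_of_neg h]; ring
  · simp [h]
  · rw [Real.sign_of_pos h, abs_of_pos h]; ring

/-- The S₁-parameterization characteristic function of a Cauchy law factors as the product of
a symmetric Cauchy factor and an S₀-parameterization characteristic function with skewness
`sgn β`, scale `|σβ|`, and location `μ + (2/π)σβ log|σβ|`.  (Here `Real.log 0 = 0` and
`Real.sign 0 = 0` implement the stated conventions at `t = 0` and `β = 0`.) -/
theorem cauchy_S1_eq_symm_mul_S0 (β σ μ : ℝ) (hβ : β ∈ Set.Icc (-1 : ℝ) 1) (hσ : 0 < σ)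
    (t : ℝ) :
    Complex.exp (-(|σ * t| : ℝ) * (1 + Complex.I * (2 / π) * β * Real.sign t * Real.log |t|)
        + Complex.I * μ * t) =
      Complex.exp (-(σ * (1 - |β|) * |t| : ℝ)) *
        Complex.exp (-(|σ * β * t| : ℝ) *
            (1 + Complex.I * (2 / π) * Real.sign (β * t) * Real.log |σ * β * t|)
          + Complex.I * t * (μ + (2 / π) * σ * β * Real.log |σ * β|)) := by
  rw [← Complex.exp_add]
  congr 1
  have h1 : |σ * t| = σ * |t| := by
    rw [abs_mul, abs_of_pos hσ]
  have h2 : |σ * β * t| = σ * |β| * |t| := by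
    rw [abs_mul, abs_mul, abs_of_pos hσ]
  have h3 : |σ * t| * (β * Real.sign t * Real.log |t|) = σ * β * t * Real.log |t| := by
    rw [h1]
    linear_combination (σ * β * Real.log |t|) * sign_mul_abs' t
  have h4 : |σ * β * t| * (Real.sign (β * t) * Real.log |σ * β * t|)
      = σ * β * t * Real.log |σ * β| + σ * β * t * Real.log |t| := by
    rcases eq_or_ne (β * t) 0 with h | h
    · have h0 : σ * β * t = 0 := by rw [mul_assoc, h, mul_zero]
      rw [mul_assoc σ β t, h]
      simp [Real.sign_zero]
    · have hb : β ≠ 0 := fun hb => h (by simp [hb])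
      have ht : t ≠ 0 := fun ht => h (by simp [ht])
      have hlog : Real.log |σ * β * t| = Real.log |σ * β| + Real.log |t| := by
        rw [abs_mul, Real.log_mul (abs_ne_zero.2 (mul_ne_zero (ne_of_gt hσ) hb))
          (abs_ne_zero.2 ht)]
      have hsgn : |σ * β * t| * Real.sign (β * t) = σ * β * t := by
        have h5 : Real.sign (β * t) * |β * t| = β * t := sign_mul_abs' _
        have h6 : |σ * β * t| = σ * |β * t| := by
          rw [mul_assoc, abs_mul, abs_of_pos hσ]
        rw [h6]
        nlinarith
      calc |σ * β * t| * (Real.sign (β * t) * Real.log |σ * β * t|)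
          = (|σ * β * t| * Real.sign (β * t)) * Real.log |σ * β * t| := by ring
        _ = σ * β * t * Real.log |σ * β| + σ * β * t * Real.log |t| := by
            rw [hsgn, hlog]; ring
  have h1c : ((|σ * t| : ℝ) : ℂ) = (σ : ℂ) * ((|t| : ℝ) : ℂ) := by exact_mod_cast h1
  have h2c : ((|σ * β * t| : ℝ) : ℂ)
      = (σ : ℂ) * ((|β| : ℝ) : ℂ) * ((|t| : ℝ) : ℂ) := by exact_mod_cast h2
  have h3c : ((|σ * t| : ℝ) : ℂ) * ((β : ℂ) * (Real.sign t : ℂ) * (Real.log |t| : ℂ))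
      = (σ : ℂ) * β * t * (Real.log |t| : ℂ) := by exact_mod_cast h3
  have h4c : ((|σ * β * t| : ℝ) : ℂ)
        * ((Real.sign (β * t) : ℂ) * (Real.log |σ * β * t| : ℂ))
      = (σ : ℂ) * β * t * (Real.log |σ * β| : ℂ)
        + (σ : ℂ) * β * t * (Real.log |t| : ℂ) := by exact_mod_cast h4
  push_cast
  linear_combination (-1 : ℂ) * h1c - Complex.I * (2 / (π : ℂ)) * h3c + h2c
    + Complex.I * (2 / (π : ℂ)) * h4c
end
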